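/- arXiv:2006.14295 — 8 statements merged into one kernel-verified Lean document; each statement's English description precedes it below -/
import Mathlib

section
/- Let f : ℝⁿ → ℝⁿ and h : ℝⁿ → ℝᵐ be C^∞ maps, and define the observability map Φ : ℝⁿ → (ℝᵐ)ⁿ by Φ(x) = (L_f^0 h(x), L_f^1 h(x), …, L_f^{n−1} h(x)). Suppose that at a point x⁰ ∈ ℝⁿ the derivative DΦ(x⁰) : ℝⁿ → (ℝᵐ)ⁿ is injective (i.e. the observability–identifiability matrix has full rank n at x⁰). Then there is a neighbourhood 𝒩 of x⁰ such that for any t₀ < t_f and any two differentiable curves x̂, x* : [t₀, t_f] → ℝⁿ satisfying ẋ = f(x) with x̂(t₀) ∈ 𝒩 and x*(t₀) ∈ 𝒩, the equality of outputs h(x̂(t)) = h(x*(t)) for all t ∈ [t₀, t_f] implies x̂(t₀) = x*(t₀). In other words, the system is locally observable at x⁰. -/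
/-- Iterated Lie derivatives of the output map `h` along the vector field `f`:
`L_f^0 h = h` and `L_f^{k+1} h (x) = D(L_f^k h)(x) · f(x)`. -/
noncomputable def lieDeriv {n m : ℕ} (f : (Fin n → ℝ) → (Fin n → ℝ))
    (h : (Fin n → ℝ) → (Fin m → ℝ)) : ℕ → (Fin n → ℝ) → (Fin m → ℝ)
  | 0 => h
  | k + 1 => fun x => fderiv ℝ (lieDeriv f h k) x (f x)

lemma lieDeriv_contDiff {n m : ℕ} {f : (Fin n → ℝ) → (Fin n → ℝ)}
    {h : (Fin n → ℝ) → (Fin m → ℝ)} (hf : ContDiff ℝ (⊤ : ℕ∞) f) (hh : ContDiff ℝ (⊤ : ℕ∞) h) :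
    ∀ k, ContDiff ℝ (⊤ : ℕ∞) (lieDeriv f h k)
  | 0 => hh
  | k + 1 => ((lieDeriv_contDiff hf hh k).fderiv_right (by simp)).clm_apply hf

lemma lieDeriv_hasDerivWithinAt {n m : ℕ} {f : (Fin n → ℝ) → (Fin n → ℝ)}
    {h : (Fin n → ℝ) → (Fin m → ℝ)} (hf : ContDiff ℝ (⊤ : ℕ∞) f) (hh : ContDiff ℝ (⊤ : ℕ∞) h)
    {x : ℝ → (Fin n → ℝ)} {s : Set ℝ} {t : ℝ}
    (hx : HasDerivWithinAt x (f (x t)) s t) (k : ℕ) :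
    HasDerivWithinAt (fun t => lieDeriv f h k (x t)) (lieDeriv f h (k + 1) (x t)) s t := by
  have hL : HasFDerivAt (lieDeriv f h k) (fderiv ℝ (lieDeriv f h k) (x t)) (x t) :=
    ((lieDeriv_contDiff hf hh k).differentiable (by simp) (x t)).hasFDerivAt
  have := hL.comp_hasDerivWithinAt t hx
  exact this

/-- Observability–identifiability condition (autonomous, input-free form): if the Jacobian
of the observability map `Φ(x) = (L_f^0 h(x), …, L_f^{n−1} h(x))` is injective (full rank `n`)
at `x⁰`, then there is a neighbourhood `𝒩` of `x⁰` such that any two solutions of `ẋ = f(x)`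
on `[t₀, t_f]` starting in `𝒩` that produce the same output `h(x(t))` on `[t₀, t_f]` have the
same initial condition: the system is locally observable at `x⁰`. -/
theorem oic_implies_local_observability
    {n m : ℕ} (hn : 0 < n) (hm : 0 < m)
    (f : (Fin n → ℝ) → (Fin n → ℝ)) (h : (Fin n → ℝ) → (Fin m → ℝ))
    (hf : ContDiff ℝ (⊤ : ℕ∞) f) (hh : ContDiff ℝ (⊤ : ℕ∞) h)
    (x0 : Fin n → ℝ)
    (hrank : Function.Injective
      (fderiv ℝ (fun x => (fun i : Fin n => lieDeriv f h (i : ℕ) x)) x0)) :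
    ∃ 𝒩 ∈ nhds x0, ∀ t0 tf : ℝ, t0 < tf →
      ∀ xh xs : ℝ → (Fin n → ℝ),
        (∀ t ∈ Set.Icc t0 tf, HasDerivWithinAt xh (f (xh t)) (Set.Icc t0 tf) t) →
        (∀ t ∈ Set.Icc t0 tf, HasDerivWithinAt xs (f (xs t)) (Set.Icc t0 tf) t) →
        xh t0 ∈ 𝒩 → xs t0 ∈ 𝒩 →
        (∀ t ∈ Set.Icc t0 tf, h (xh t) = h (xs t)) →
        xh t0 = xs t0 := by
  classical
  set Φ : (Fin n → ℝ) → (Fin n → (Fin m → ℝ)) :=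
    fun x => (fun i : Fin n => lieDeriv f h (i : ℕ) x) with hΦdef
  have hΦ : ContDiff ℝ (⊤ : ℕ∞) Φ :=
    contDiff_pi.2 fun i => lieDeriv_contDiff hf hh (i : ℕ)
  set Φ' := fderiv ℝ Φ x0 with hΦ'def
  have hstrict : HasStrictFDerivAt Φ Φ' x0 :=
    hΦ.contDiffAt.hasStrictFDerivAt (by simp)
  -- antilipschitz constant for the injective derivative
  obtain ⟨K, hK0, hKanti⟩ := (Φ'.toLinearMap).injective_iff_antilipschitz.mp hrank
  -- choose c = K⁻¹ / 2 < K⁻¹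
  have hKinv : (0 : NNReal) < K⁻¹ := by positivity
  set c : NNReal := K⁻¹ / 2 with hc
  have hc0 : 0 < c := by positivity
  have hcK : c < K⁻¹ := by
    rw [hc]
    exact NNReal.half_lt_self (ne_of_gt hKinv)
  obtain ⟨s, hs, happrox⟩ := hstrict.approximates_deriv_on_nhds (Or.inr hc0)
  have hinj : Set.InjOn Φ s := by
    intro x hx y hy hxy
    have h1 : ‖Φ x - Φ y - Φ' (x - y)‖ ≤ c * ‖x - y‖ := happrox x hx y hy
    have h2 : ‖x - y‖ ≤ K * ‖Φ' (x - y)‖ := by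
      have := hKanti.le_mul_dist (x - y) 0
      simpa [dist_eq_norm] using this
    rw [hxy, sub_self, zero_sub, norm_neg] at h1
    by_contra hne
    have hxyne : x - y ≠ 0 := sub_ne_zero.2 hne
    have hnorm : (0 : ℝ) < ‖x - y‖ := norm_pos_iff.2 hxyne
    have h3 : ‖x - y‖ ≤ K * (c * ‖x - y‖) :=
      h2.trans (mul_le_mul_of_nonneg_left h1 K.coe_nonneg)
    have hKc : (K : ℝ) * c < 1 := by
      have : (K : ℝ) * c < (K : ℝ) * (K : ℝ)⁻¹ := by
        apply mul_lt_mul_of_pos_left _ (by exact_mod_cast hK0)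
        exact_mod_cast (by simpa using hcK)
      rwa [mul_inv_cancel₀ (by exact_mod_cast hK0.ne')] at this
    nlinarith [h3, hnorm]
  refine ⟨s, hs, ?_⟩
  intro t0 tf ht0tf xh xs hxh hxs hxh0 hxs0 houts
  have ht0 : t0 ∈ Set.Icc t0 tf := ⟨le_refl _, ht0tf.le⟩
  -- all Lie derivatives agree along the two trajectories
  have key : ∀ k, ∀ t ∈ Set.Icc t0 tf,
      lieDeriv f h k (xh t) = lieDeriv f h k (xs t) := by
    intro k
    induction k with
    | zero => exact houts
    | succ k ih =>
      intro t ht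
      have hdh := lieDeriv_hasDerivWithinAt hf hh (hxh t ht) k
      have hds := lieDeriv_hasDerivWithinAt hf hh (hxs t ht) k
      have hdh' : HasDerivWithinAt (fun t => lieDeriv f h k (xs t))
          (lieDeriv f h (k + 1) (xh t)) (Set.Icc t0 tf) t :=
        hdh.congr (fun y hy => (ih y hy).symm) (ih t ht).symm
      have hud : UniqueDiffWithinAt ℝ (Set.Icc t0 tf) t :=
        (uniqueDiffOn_Icc ht0tf) t ht
      have := hdh'.derivWithin hud
      rw [hds.derivWithin hud] at this
      exact this.symm
  have hΦeq : Φ (xh t0) = Φ (xs t0) := by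
    funext i
    exact key (i : ℕ) t0 ht0
  exact hinj hxh0 hxs0 hΦeq
end

section
/- Let β, ρ, μ, d, τ be real numbers and let S, I, R : J → ℝ be differentiable on an open interval J and satisfy Ṡ = −βSI, İ = βSI − (ρ+μ)I, Ṙ = ρI − dR on J. Then for every λ > 0, the scaled functions S̃ = λS, Ĩ = λI, R̃ = R satisfy the same system of equations with the transformed parameters β̃ = β/λ, ρ̃ = ρ/λ, μ̃ = μ + ρ(1 − 1/λ), d̃ = d, and the output is unchanged: ρ̃ Ĩ(t) + τ = ρ I(t) + τ for all t ∈ J. (Hence in this model with constant parameters, β, ρ, μ are structurally unidentifiable and S, I are unobservable from the output y = ρI + τ.) -/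
/-! The mass-action term satisfies `(β/λ)(λS)(λI) = λ βSI`, so after `β ↦ β/λ` the right-hand
sides of the `S` and `I` equations scale by `λ`, like the derivatives of `λS` and `λI`.
The recovery flux `ρI`, which is both the inflow of `R` and the output, is preserved by
`ρ ↦ ρ/λ`, and `μ ↦ μ + ρ(1 - 1/λ)` keeps the total removal rate `ρ + μ` of `I` fixed. -/

section ScalingIdentities

variable {K : Type*} [Field K]

theorem div_mul_mul_mul_mul_eq {l : K} (hl : l ≠ 0) (β s i : K) :
    β / l * (l * s) * (l * i) = l * (β * s * i) := by
  field_simp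

theorem div_mul_mul_cancel_left {l : K} (hl : l ≠ 0) (ρ i : K) : ρ / l * (l * i) = ρ * i := by
  field_simp

theorem div_add_add_mul_one_sub_one_div (ρ μ l : K) : ρ / l + (μ + ρ * (1 - 1 / l)) = ρ + μ := by
  ring

end ScalingIdentities

/-- Lie symmetry of the SIR model 15 (Roda et al.): if `(S, I, R)` solves
`Ṡ = −βSI`, `İ = βSI − (ρ+μ)I`, `Ṙ = ρI − dR` on the open interval `(a, b)`, then for
every `λ > 0` the scaled functions `S̃ = λS`, `Ĩ = λI`, `R̃ = R` solve the same system with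
transformed parameters `β̃ = β/λ`, `ρ̃ = ρ/λ`, `μ̃ = μ + ρ(1 − 1/λ)`, `d̃ = d`, and the
output `y = ρI + τ` is unchanged. Hence `β, ρ, μ` are structurally unidentifiable and
`S, I` unobservable from this output. -/
theorem sir15_scaling_symmetry (β ρ μ d τ a b : ℝ) (S I R : ℝ → ℝ)
    (hS : ∀ t ∈ Set.Ioo a b, HasDerivAt S (-β * S t * I t) t)
    (hI : ∀ t ∈ Set.Ioo a b, HasDerivAt I (β * S t * I t - (ρ + μ) * I t) t)
    (hR : ∀ t ∈ Set.Ioo a b, HasDerivAt R (ρ * I t - d * R t) t) :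
    ∀ l : ℝ, 0 < l → ∀ t ∈ Set.Ioo a b,
      HasDerivAt (fun s => l * S s) (-(β / l) * (l * S t) * (l * I t)) t ∧
      HasDerivAt (fun s => l * I s)
        ((β / l) * (l * S t) * (l * I t) - ((ρ / l) + (μ + ρ * (1 - 1 / l))) * (l * I t)) t ∧
      HasDerivAt R ((ρ / l) * (l * I t) - d * R t) t ∧
      (ρ / l) * (l * I t) + τ = ρ * I t + τ := by
  intro l hl t ht
  have hflux := div_mul_mul_cancel_left hl.ne' ρ (I t)
  refine ⟨?_, ?_, ?_, by rw [hflux]⟩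
  · refine ((hS t ht).const_mul l).congr_deriv ?_
    rw [← neg_div, div_mul_mul_mul_mul_eq hl.ne']
  · refine ((hI t ht).const_mul l).congr_deriv ?_
    rw [div_mul_mul_mul_mul_eq hl.ne', div_add_add_mul_one_sub_one_div]
    ring
  · rw [hflux]
    exact hR t ht
end

section
/- Let β, ρ, μ, d, τ be real numbers and let S, I, R : J → ℝ be differentiable on an open interval J, with t₀ ∈ J, and satisfy Ṡ = −βSI, İ = βSI − (ρ+μ)I, Ṙ = ρI − dR on J. Then for every d' ∈ ℝ and every c ∈ ℝ, the function R'(t) = e^{−d'(t−t₀)} c + ∫_{t₀}^{t} e^{−d'(t−s)} ρ I(s) ds satisfies Ṙ' = ρI − d'R' on J, so that (S, I, R') is a solution of the same model with the parameter d replaced by d' and with the output y(t) = ρ I(t) + τ identical to that of (S, I, R). (Hence R is unobservable and d is structurally unidentifiable from this output.) -/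
open intervalIntegral

/-!
Writing `e^{-d'(u-s)} = e^{-d'u} e^{d's}`, the candidate `R'` is `e^{-d'u}` times
`e^{d't₀} c + ∫_{t₀}^{u} e^{d's} ρ I(s) ds`, whose derivative is `e^{d'u} ρ I(u)` by the
fundamental theorem of calculus (`I` is continuous, being differentiable). The product rule then
gives `Ṙ' = ρI - d'R'`, while `S`, `I` and the output `ρI + τ` are untouched.
-/

/-- The variation-of-constants solution of `ẋ = g - k x`, `x t₀ = c`. -/
noncomputable def duhamel (k c t₀ : ℝ) (g : ℝ → ℝ) (u : ℝ) : ℝ :=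
  Real.exp (-k * (u - t₀)) * c + ∫ s in t₀..u, Real.exp (-k * (u - s)) * g s

lemma Real.exp_neg_mul_sub (k u s : ℝ) :
    Real.exp (-k * (u - s)) = Real.exp (-k * u) * Real.exp (k * s) := by
  rw [← Real.exp_add]
  ring_nf

lemma duhamel_eq_exp_mul (k c t₀ : ℝ) (g : ℝ → ℝ) (u : ℝ) :
    duhamel k c t₀ g u =
      Real.exp (-k * u) * (Real.exp (k * t₀) * c + ∫ s in t₀..u, Real.exp (k * s) * g s) := by
  simp only [duhamel, Real.exp_neg_mul_sub, mul_assoc, integral_const_mul]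
  ring

lemma hasDerivAt_duhamel {U : Set ℝ} (hU : IsOpen U) (hU' : U.OrdConnected) {g : ℝ → ℝ}
    (hg : ContinuousOn g U) (k c : ℝ) {t₀ t : ℝ} (ht₀ : t₀ ∈ U) (ht : t ∈ U) :
    HasDerivAt (duhamel k c t₀ g) (g t - k * duhamel k c t₀ g t) t := by
  have hfg : ContinuousOn (fun s => Real.exp (k * s) * g s) U := by fun_prop
  have hint : HasDerivAt (fun u => ∫ s in t₀..u, Real.exp (k * s) * g s)
      (Real.exp (k * t) * g t) t :=
    integral_hasDerivAt_right ((hfg.mono (hU'.uIcc_subset ht₀ ht)).intervalIntegrable)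
      (hfg.stronglyMeasurableAtFilter hU t ht) (hfg.continuousAt (hU.mem_nhds ht))
  have hexp : HasDerivAt (fun u => Real.exp (-k * u)) (Real.exp (-k * t) * -k) t := by
    simpa using ((hasDerivAt_id t).const_mul (-k)).exp
  have hcancel : Real.exp (-k * t) * Real.exp (k * t) = 1 := by
    rw [← Real.exp_add]; simp
  rw [show duhamel k c t₀ g = _ from funext (duhamel_eq_exp_mul k c t₀ g)]
  refine (hexp.mul (hint.const_add (Real.exp (k * t₀) * c))).congr_deriv ?_
  linear_combination g t * hcancel

theorem sir15_R_unobservable_d_unidentifiable_general (β ρ μ τ a b t₀ : ℝ)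
    (ht₀ : t₀ ∈ Set.Ioo a b) (S I : ℝ → ℝ)
    (hS : ∀ t ∈ Set.Ioo a b, HasDerivAt S (-β * S t * I t) t)
    (hI : ∀ t ∈ Set.Ioo a b, HasDerivAt I (β * S t * I t - (ρ + μ) * I t) t) :
    ∀ d' c : ℝ, ∀ t ∈ Set.Ioo a b,
      HasDerivAt
        (fun u => Real.exp (-d' * (u - t₀)) * c
          + ∫ s in t₀..u, Real.exp (-d' * (u - s)) * (ρ * I s))
        (ρ * I t - d' * (Real.exp (-d' * (t - t₀)) * c
          + ∫ s in t₀..t, Real.exp (-d' * (t - s)) * (ρ * I s))) t ∧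
      HasDerivAt S (-β * S t * I t) t ∧
      HasDerivAt I (β * S t * I t - (ρ + μ) * I t) t ∧
      ρ * I t + τ = ρ * I t + τ := by
  intro d' c t ht
  have hρI : ContinuousOn (fun s => ρ * I s) (Set.Ioo a b) :=
    continuousOn_const.mul (HasDerivAt.continuousOn hI)
  exact ⟨hasDerivAt_duhamel isOpen_Ioo Set.ordConnected_Ioo hρI d' c ht₀ ht,
    hS t ht, hI t ht, rfl⟩

/-- In the SIR model 15 (Roda et al.) with output `y = ρI + τ`, the state `R` is
unobservable and the parameter `d` unidentifiable: if `(S, I, R)` solves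
`Ṡ = −βSI`, `İ = βSI − (ρ+μ)I`, `Ṙ = ρI − dR` on the open interval `(a, b)` containing `t₀`,
then for every `d'` and `c` the function
`R'(t) = e^{−d'(t−t₀)} c + ∫_{t₀}^{t} e^{−d'(t−s)} ρ I(s) ds`
satisfies `Ṙ' = ρI − d'R'` on `(a, b)`, so `(S, I, R')` solves the same model with `d`
replaced by `d'` and with identical output `y = ρI + τ`. -/
theorem sir15_R_unobservable_d_unidentifiable (β ρ μ d τ a b t₀ : ℝ)
    (ht₀ : t₀ ∈ Set.Ioo a b) (S I R : ℝ → ℝ)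
    (hS : ∀ t ∈ Set.Ioo a b, HasDerivAt S (-β * S t * I t) t)
    (hI : ∀ t ∈ Set.Ioo a b, HasDerivAt I (β * S t * I t - (ρ + μ) * I t) t)
    (hR : ∀ t ∈ Set.Ioo a b, HasDerivAt R (ρ * I t - d * R t) t) :
    ∀ d' c : ℝ, ∀ t ∈ Set.Ioo a b,
      HasDerivAt
        (fun u => Real.exp (-d' * (u - t₀)) * c
          + ∫ s in t₀..u, Real.exp (-d' * (u - s)) * (ρ * I s))
        (ρ * I t - d' * (Real.exp (-d' * (t - t₀)) * c
          + ∫ s in t₀..t, Real.exp (-d' * (t - s)) * (ρ * I s))) t ∧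
      HasDerivAt S (-β * S t * I t) t ∧
      HasDerivAt I (β * S t * I t - (ρ + μ) * I t) t ∧
      ρ * I t + τ = ρ * I t + τ :=
  sir15_R_unobservable_d_unidentifiable_general β ρ μ τ a b t₀ ht₀ S I hS hI
end

section
/- Fix N > 0. Let S, I, R : J → ℝ and S', I', R' : J → ℝ be differentiable on an open interval J and satisfy the basic SIR equations Ṡ = −βSI/N, İ = βSI/N − γI, Ṙ = γI with parameters (β, γ), and the same equations with parameters (β', γ'), respectively. Assume β > 0, β' > 0, and for all t ∈ J: I(t) = I'(t) > 0, S(t) > 0 and S'(t) > 0. If the two solutions produce the same output y = I on J, then β = β', γ = γ', and S(t) = S'(t) for all t ∈ J. (That is, in the basic SIR model with known total population N and measured output I, the transmission rate β and recovery rate γ are structurally identifiable and the susceptible state S is observable.) -/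
/-!
Since the two solutions share `I`, they share `İ = I (βS/N - γ)`; dividing by `I > 0` gives
`βS/N - β'S'/N = γ - γ'`. Differentiating a relation `cS - c'S' = const` along the two
solutions and dividing by `-I/N` yields `cβS = c'β'S'`. Applied twice this gives
`β²S = β'²S'` and `β³S = β'³S'`, whose quotient is `β = β'`; then `S = S'` and `γ = γ'`.
-/

open Set

theorem HasDerivAt.eq_of_eqOn {𝕜 F : Type*} [NontriviallyNormedField 𝕜] [NormedAddCommGroup F]
    [NormedSpace 𝕜 F] {f g : 𝕜 → F} {f' g' : F} {t : 𝕜} {s : Set 𝕜} (hfg : EqOn f g s)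
    (hs : IsOpen s) (ht : t ∈ s) (hf : HasDerivAt f f' t) (hg : HasDerivAt g g' t) :
    f' = g' :=
  hf.unique (hg.congr_of_eventuallyEq (Filter.eventuallyEq_of_mem (hs.mem_nhds ht) hfg))

section SIR

variable {s : Set ℝ} {N β γ β' γ' : ℝ} {S I S' I' : ℝ → ℝ}

theorem sir_susceptible_sub_eq_of_infected_eq (hs : IsOpen s)
    (hI : ∀ t ∈ s, HasDerivAt I (β * S t * I t / N - γ * I t) t)
    (hI' : ∀ t ∈ s, HasDerivAt I' (β' * S' t * I' t / N - γ' * I' t) t)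
    (hout : EqOn I I' s) (hI0 : ∀ t ∈ s, I t ≠ 0) :
    ∀ t ∈ s, β / N * S t - β' / N * S' t = γ - γ' := by
  intro t ht
  have hderiv := (hI t ht).eq_of_eqOn hout hs ht (hI' t ht)
  rw [← hout ht] at hderiv
  apply mul_right_cancel₀ (hI0 t ht)
  linear_combination hderiv

theorem sir_susceptible_mul_eq_of_sub_eq_const {c c' k : ℝ} (hs : IsOpen s) (hN : N ≠ 0)
    (hS : ∀ t ∈ s, HasDerivAt S (-β * S t * I t / N) t)
    (hS' : ∀ t ∈ s, HasDerivAt S' (-β' * S' t * I t / N) t)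
    (hI0 : ∀ t ∈ s, I t ≠ 0) (hk : ∀ t ∈ s, c * S t - c' * S' t = k) :
    ∀ t ∈ s, c * β * S t = c' * β' * S' t := by
  intro t ht
  have hderiv := (((hS t ht).const_mul c).sub ((hS' t ht).const_mul c')).eq_of_eqOn hk hs ht
    (hasDerivAt_const t k)
  apply mul_right_cancel₀ (div_ne_zero (hI0 t ht) hN)
  linear_combination -hderiv

end SIR

theorem sir6_beta_gamma_identifiable_S_observable_general
    (N β γ β' γ' a b : ℝ) (hN : 0 < N) (hab : a < b)
    (hβ : 0 < β)
    (S I S' I' : ℝ → ℝ)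
    (hS : ∀ t ∈ Set.Ioo a b, HasDerivAt S (-β * S t * I t / N) t)
    (hI : ∀ t ∈ Set.Ioo a b, HasDerivAt I (β * S t * I t / N - γ * I t) t)
    (hS' : ∀ t ∈ Set.Ioo a b, HasDerivAt S' (-β' * S' t * I' t / N) t)
    (hI' : ∀ t ∈ Set.Ioo a b, HasDerivAt I' (β' * S' t * I' t / N - γ' * I' t) t)
    (hout : ∀ t ∈ Set.Ioo a b, I t = I' t)
    (hIpos : ∀ t ∈ Set.Ioo a b, 0 < I t)
    (hSpos : ∀ t ∈ Set.Ioo a b, 0 < S t) :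
    β = β' ∧ γ = γ' ∧ ∀ t ∈ Set.Ioo a b, S t = S' t := by
  have hI0 : ∀ t ∈ Ioo a b, I t ≠ 0 := fun t ht => (hIpos t ht).ne'
  have hS'I : ∀ t ∈ Ioo a b, HasDerivAt S' (-β' * S' t * I t / N) t := fun t ht => by
    rw [hout t ht]; exact hS' t ht
  have hlin := sir_susceptible_sub_eq_of_infected_eq isOpen_Ioo hI hI' hout hI0
  have hsq := sir_susceptible_mul_eq_of_sub_eq_const isOpen_Ioo hN.ne' hS hS'I hI0 hlin
  have hcube := sir_susceptible_mul_eq_of_sub_eq_const isOpen_Ioo hN.ne' hS hS'I hI0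
    (fun t ht => sub_eq_zero.2 (hsq t ht))
  obtain ⟨t₀, ht₀⟩ := nonempty_Ioo.2 hab
  have hββ' : β = β' := by
    have hpos : 0 < β / N * β * S t₀ := by have := hSpos t₀ ht₀; positivity
    apply mul_left_cancel₀ hpos.ne'
    linear_combination hcube t₀ ht₀ - β' * hsq t₀ ht₀
  subst hββ'
  have hSS' : ∀ t ∈ Ioo a b, S t = S' t := fun t ht =>
    mul_left_cancel₀ (by positivity) (hsq t ht)
  refine ⟨rfl, ?_, hSS'⟩
  linear_combination -(hlin t₀ ht₀) + β / N * hSS' t₀ ht₀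

/-- In the basic SIR model 6 (Zheng) with known total population `N` and measured output
`y = I`, the parameters `β` and `γ` are structurally identifiable and the state `S` is
observable: any two solutions of `Ṡ = −βSI/N`, `İ = βSI/N − γI`, `Ṙ = γI` on the open
interval `(a, b)` with positive transmission rates, equal positive infected trajectories
and positive susceptible trajectories must share `β`, `γ` and `S`. -/
theorem sir6_beta_gamma_identifiable_S_observable
    (N β γ β' γ' a b : ℝ) (hN : 0 < N) (hab : a < b)
    (hβ : 0 < β) (hβ' : 0 < β')
    (S I R S' I' R' : ℝ → ℝ)
    (hS : ∀ t ∈ Set.Ioo a b, HasDerivAt S (-β * S t * I t / N) t)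
    (hI : ∀ t ∈ Set.Ioo a b, HasDerivAt I (β * S t * I t / N - γ * I t) t)
    (hR : ∀ t ∈ Set.Ioo a b, HasDerivAt R (γ * I t) t)
    (hS' : ∀ t ∈ Set.Ioo a b, HasDerivAt S' (-β' * S' t * I' t / N) t)
    (hI' : ∀ t ∈ Set.Ioo a b, HasDerivAt I' (β' * S' t * I' t / N - γ' * I' t) t)
    (hR' : ∀ t ∈ Set.Ioo a b, HasDerivAt R' (γ' * I' t) t)
    (hout : ∀ t ∈ Set.Ioo a b, I t = I' t)
    (hIpos : ∀ t ∈ Set.Ioo a b, 0 < I t)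
    (hSpos : ∀ t ∈ Set.Ioo a b, 0 < S t)
    (hSpos' : ∀ t ∈ Set.Ioo a b, 0 < S' t) :
    β = β' ∧ γ = γ' ∧ ∀ t ∈ Set.Ioo a b, S t = S' t :=
  sir6_beta_gamma_identifiable_S_observable_general N β γ β' γ' a b hN hab hβ S I S' I' hS hI hS'
    hI' hout hIpos hSpos
end

section
/- Fix N > 0. Let (S, I, R, Q) and (S', I', R', Q') be differentiable functions on an open interval J satisfying the SIR-with-quarantine equations Ṡ = −βSI/N, İ = βSI/N − γI − δI, Ṙ = γI, Q̇ = δI with parameters (β, γ, δ) and (β', γ', δ') respectively, with the same N. Assume β > 0, β' > 0, and for all t ∈ J: I(t) = I'(t) > 0, R(t) = R'(t), Q(t) = Q'(t), S(t) > 0, S'(t) > 0. Then β = β', γ = γ', δ = δ', and S(t) = S'(t) for all t ∈ J. (That is, with outputs I, R, Q measured and known population N, the parameters β, γ, δ are structurally identifiable and the state S is observable.) -/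
/-!
Each measured output has derivative (rate) × I with I > 0 known, so equal outputs force equal
rates: Ṙ and Q̇ give γ = γ', İ = (βS/N − γ − δ) I then gives βS = β'S' =: k, and the
susceptible equation turns into k̇ = −β · kI/N = −β' · kI/N, whence β = β' and S = S'.
-/

open Set

section DerivUnique

variable {𝕜 : Type*} [NontriviallyNormedField 𝕜] {U : Set 𝕜} {t : 𝕜}

theorem HasDerivAt.unique_of_eqOn {F : Type*} [NormedAddCommGroup F] [NormedSpace 𝕜 F]
    {f g : 𝕜 → F} {d e : F} (hU : IsOpen U) (hfg : EqOn f g U) (ht : t ∈ U)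
    (hf : HasDerivAt f d t) (hg : HasDerivAt g e t) : d = e :=
  hf.unique (hg.congr_of_eventuallyEq (hfg.eventuallyEq_of_mem (hU.mem_nhds ht)))

theorem HasDerivAt.rate_eq_of_eqOn {f g : 𝕜 → 𝕜} {c c' v : 𝕜} (hU : IsOpen U)
    (hfg : EqOn f g U) (ht : t ∈ U) (hf : HasDerivAt f (c * v) t)
    (hg : HasDerivAt g (c' * v) t) (hv : v ≠ 0) : c = c' :=
  mul_right_cancel₀ hv (hf.unique_of_eqOn hU hfg ht hg)

end DerivUnique

theorem sir7_identifiable_with_outputs_I_R_Q_general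
    (N β γ δ β' γ' δ' a b : ℝ) (hN : 0 < N) (hab : a < b)
    (hβ : 0 < β)
    (S I R Q S' I' R' Q' : ℝ → ℝ)
    (hS : ∀ t ∈ Set.Ioo a b, HasDerivAt S (-β * S t * I t / N) t)
    (hI : ∀ t ∈ Set.Ioo a b, HasDerivAt I (β * S t * I t / N - γ * I t - δ * I t) t)
    (hR : ∀ t ∈ Set.Ioo a b, HasDerivAt R (γ * I t) t)
    (hQ : ∀ t ∈ Set.Ioo a b, HasDerivAt Q (δ * I t) t)
    (hS' : ∀ t ∈ Set.Ioo a b, HasDerivAt S' (-β' * S' t * I' t / N) t)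
    (hI' : ∀ t ∈ Set.Ioo a b, HasDerivAt I' (β' * S' t * I' t / N - γ' * I' t - δ' * I' t) t)
    (hR' : ∀ t ∈ Set.Ioo a b, HasDerivAt R' (γ' * I' t) t)
    (hQ' : ∀ t ∈ Set.Ioo a b, HasDerivAt Q' (δ' * I' t) t)
    (houtI : ∀ t ∈ Set.Ioo a b, I t = I' t)
    (hIpos : ∀ t ∈ Set.Ioo a b, 0 < I t)
    (houtR : ∀ t ∈ Set.Ioo a b, R t = R' t)
    (houtQ : ∀ t ∈ Set.Ioo a b, Q t = Q' t)
    (hSpos : ∀ t ∈ Set.Ioo a b, 0 < S t) :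
    β = β' ∧ γ = γ' ∧ δ = δ' ∧ ∀ t ∈ Set.Ioo a b, S t = S' t := by
  obtain ⟨t₀, ht₀⟩ := nonempty_Ioo.2 hab
  have hU : IsOpen (Ioo a b) := isOpen_Ioo
  have hγ : γ = γ' := (hR t₀ ht₀).rate_eq_of_eqOn hU houtR ht₀
    ((hR' t₀ ht₀).congr_deriv (by rw [houtI t₀ ht₀])) (hIpos t₀ ht₀).ne'
  have hδ : δ = δ' := (hQ t₀ ht₀).rate_eq_of_eqOn hU houtQ ht₀
    ((hQ' t₀ ht₀).congr_deriv (by rw [houtI t₀ ht₀])) (hIpos t₀ ht₀).ne'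
  subst hγ hδ
  have hk : ∀ t ∈ Ioo a b, β * S t = β' * S' t := fun t ht => by
    have h : β * S t / N - γ - δ = β' * S' t / N - γ - δ :=
      HasDerivAt.rate_eq_of_eqOn hU houtI ht ((hI t ht).congr_deriv (by ring))
        ((hI' t ht).congr_deriv (by rw [houtI t ht]; ring)) (hIpos t ht).ne'
    exact (div_left_inj' hN.ne').1 (by linarith)
  have hββ' : β = β' := by
    have hv : 0 < β * S t₀ * I t₀ / N := by
      have := hSpos t₀ ht₀; have := hIpos t₀ ht₀; positivity
    refine neg_inj.1 (HasDerivAt.rate_eq_of_eqOn hU hk ht₀ ?_ ?_ hv.ne')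
    · exact (hS t₀ ht₀).const_mul β |>.congr_deriv (by ring)
    · exact (hS' t₀ ht₀).const_mul β' |>.congr_deriv (by rw [hk t₀ ht₀, houtI t₀ ht₀]; ring)
  subst hββ'
  exact ⟨rfl, rfl, rfl, fun t ht => mul_left_cancel₀ hβ.ne' (hk t ht)⟩

/-- In the SIR model 7 (Zheng) with quarantine, known population `N` and measured outputs
`I, R, Q`, the parameters `β, γ, δ` are structurally identifiable and the state `S` is
observable: any two solutions of `Ṡ = −βSI/N`, `İ = βSI/N − γI − δI`, `Ṙ = γI`, `Q̇ = δI`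
on the open interval `(a, b)` with positive transmission rates, equal positive infected
trajectories, equal `R` and `Q` trajectories, and positive susceptible trajectories must
share `β`, `γ`, `δ` and `S`. -/
theorem sir7_identifiable_with_outputs_I_R_Q
    (N β γ δ β' γ' δ' a b : ℝ) (hN : 0 < N) (hab : a < b)
    (hβ : 0 < β) (hβ' : 0 < β')
    (S I R Q S' I' R' Q' : ℝ → ℝ)
    (hS : ∀ t ∈ Set.Ioo a b, HasDerivAt S (-β * S t * I t / N) t)
    (hI : ∀ t ∈ Set.Ioo a b, HasDerivAt I (β * S t * I t / N - γ * I t - δ * I t) t)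
    (hR : ∀ t ∈ Set.Ioo a b, HasDerivAt R (γ * I t) t)
    (hQ : ∀ t ∈ Set.Ioo a b, HasDerivAt Q (δ * I t) t)
    (hS' : ∀ t ∈ Set.Ioo a b, HasDerivAt S' (-β' * S' t * I' t / N) t)
    (hI' : ∀ t ∈ Set.Ioo a b, HasDerivAt I' (β' * S' t * I' t / N - γ' * I' t - δ' * I' t) t)
    (hR' : ∀ t ∈ Set.Ioo a b, HasDerivAt R' (γ' * I' t) t)
    (hQ' : ∀ t ∈ Set.Ioo a b, HasDerivAt Q' (δ' * I' t) t)
    (houtI : ∀ t ∈ Set.Ioo a b, I t = I' t)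
    (hIpos : ∀ t ∈ Set.Ioo a b, 0 < I t)
    (houtR : ∀ t ∈ Set.Ioo a b, R t = R' t)
    (houtQ : ∀ t ∈ Set.Ioo a b, Q t = Q' t)
    (hSpos : ∀ t ∈ Set.Ioo a b, 0 < S t)
    (hSpos' : ∀ t ∈ Set.Ioo a b, 0 < S' t) :
    β = β' ∧ γ = γ' ∧ δ = δ' ∧ ∀ t ∈ Set.Ioo a b, S t = S' t :=
  sir7_identifiable_with_outputs_I_R_Q_general N β γ δ β' γ' δ' a b hN hab hβ S I R Q S' I' R' Q' hS
    hI hR hQ hS' hI' hR' hQ' houtI hIpos houtR houtQ hSpos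
end

section
/- Let (s, i) and (s', i') be differentiable functions on an open interval J satisfying the normalized SIR equations ṡ = −R₀ s i, i̇ = (R₀ s − 1) i with basic reproduction numbers R₀ > 0 and R₀' > 0 respectively. Assume that for all t ∈ J: i(t) = i'(t) > 0, s(t) > 0 and s'(t) > 0. Then R₀ = R₀' and s(t) = s'(t) for all t ∈ J. (That is, in the normalized SIR model of Franco with measured output y = i, the basic reproduction number R₀ is structurally identifiable and the susceptible fraction s is observable.) -/
/-- In the normalized SIR model 29 (Franco) with measured output `y = i`, the basic
reproduction number `R₀` is structurally identifiable and the susceptible fraction `s` is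
observable: any two solutions of `ṡ = −R₀ s i`, `i̇ = (R₀ s − 1) i` on the open interval
`(a, b)`, with positive reproduction numbers, equal positive infected fractions and
positive susceptible fractions, must share `R₀` and `s`. -/
theorem sir29_R0_identifiable_s_observable
    (R₀ R₀' a b : ℝ) (hab : a < b) (hR₀ : 0 < R₀) (hR₀' : 0 < R₀')
    (s i s' i' : ℝ → ℝ)
    (hs : ∀ t ∈ Set.Ioo a b, HasDerivAt s (-R₀ * s t * i t) t)
    (hi : ∀ t ∈ Set.Ioo a b, HasDerivAt i ((R₀ * s t - 1) * i t) t)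
    (hs' : ∀ t ∈ Set.Ioo a b, HasDerivAt s' (-R₀' * s' t * i' t) t)
    (hi' : ∀ t ∈ Set.Ioo a b, HasDerivAt i' ((R₀' * s' t - 1) * i' t) t)
    (hout : ∀ t ∈ Set.Ioo a b, i t = i' t)
    (hipos : ∀ t ∈ Set.Ioo a b, 0 < i t)
    (hspos : ∀ t ∈ Set.Ioo a b, 0 < s t)
    (hspos' : ∀ t ∈ Set.Ioo a b, 0 < s' t) :
    R₀ = R₀' ∧ ∀ t ∈ Set.Ioo a b, s t = s' t := by
  -- Step 1: equal outputs give equal derivatives of i, hence R₀ s = R₀' s' on J.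
  have key : ∀ t ∈ Set.Ioo a b, R₀ * s t = R₀' * s' t := by
    intro t ht
    have hmem : Set.Ioo a b ∈ nhds t := isOpen_Ioo.mem_nhds ht
    have heq : i =ᶠ[nhds t] i' := Filter.eventuallyEq_of_mem hmem hout
    have h2 : HasDerivAt i ((R₀' * s' t - 1) * i' t) t :=
      (hi' t ht).congr_of_eventuallyEq heq
    have := (hi t ht).unique h2
    rw [hout t ht] at this
    have hip := hipos t ht
    rw [hout t ht] at hip
    have := mul_right_cancel₀ (ne_of_gt hip) this
    linarith
  -- Step 2: differentiate R₀ s = R₀' s' to get R₀² s i = R₀'² s' i'.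
  obtain ⟨t₀, ht₀⟩ : ∃ t, t ∈ Set.Ioo a b := ⟨(a + b) / 2, by constructor <;> linarith⟩
  have key2 : R₀ ^ 2 * s t₀ = R₀' ^ 2 * s' t₀ := by
    have hmem : Set.Ioo a b ∈ nhds t₀ := isOpen_Ioo.mem_nhds ht₀
    have heq : (fun t => R₀ * s t) =ᶠ[nhds t₀] (fun t => R₀' * s' t) :=
      Filter.eventuallyEq_of_mem hmem key
    have hf : HasDerivAt (fun t => R₀ * s t) (R₀ * (-R₀ * s t₀ * i t₀)) t₀ :=
      (hs t₀ ht₀).const_mul R₀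
    have hg : HasDerivAt (fun t => R₀ * s t) (R₀' * (-R₀' * s' t₀ * i' t₀)) t₀ :=
      ((hs' t₀ ht₀).const_mul R₀').congr_of_eventuallyEq heq
    have hu := hf.unique hg
    rw [← hout t₀ ht₀] at hu
    have hip := hipos t₀ ht₀
    have : R₀ * (-R₀ * s t₀) = R₀' * (-R₀' * s' t₀) := by
      have := mul_right_cancel₀ (ne_of_gt hip) (by ring_nf; ring_nf at hu; linarith : (R₀ * (-R₀ * s t₀)) * i t₀ = (R₀' * (-R₀' * s' t₀)) * i t₀)
      exact this
    nlinarith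
  have hR : R₀ = R₀' := by
    have h1 := key t₀ ht₀
    have hsp := hspos t₀ ht₀
    have hsp' := hspos' t₀ ht₀
    nlinarith [mul_pos hR₀ hsp, mul_pos hR₀' hsp']
  refine ⟨hR, fun t ht => ?_⟩
  have h1 := key t ht
  rw [hR] at h1
  exact mul_left_cancel₀ (ne_of_gt hR₀') h1
end

section
/- Consider the SIR model 26 with states S, I, R, A, Q, J satisfying, on an open interval 𝒥 containing t₀: Ṡ = bN − S(Iλ + λQε_aε_q + λε_aA + λε_jJ + d₁), İ = k₁A − (γ₁+μ₂+d₂)I, Ṙ = γ₁I + γ₂J − d₃R, Ȧ = S(Iλ + λQε_aε_q + λε_aA + λε_jJ) − (k₁+μ₁+d₄)A, Q̇ = μ₁A − (k₂+d₅)Q, J̇ = k₂Q + μ₂I − (γ₂+d₆)J. Then for every d₃' ∈ ℝ and every c ∈ ℝ, the function R'(t) = e^{−d₃'(t−t₀)} c + ∫_{t₀}^{t} e^{−d₃'(t−s)} (γ₁ I(s) + γ₂ J(s)) ds satisfies Ṙ' = γ₁I + γ₂J − d₃'R' on 𝒥, so that (S, I, R', A, Q, J) is a solution of the same model with d₃ replaced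 by d₃', and the measured outputs Q and J are identical to those of the original solution. (Hence R is unobservable and d₃ is structurally unidentifiable from the outputs Q moreover J.) -/
open intervalIntegral

/-- In the SIR model 26 (Gallina et al.) with measured outputs `Q` and `J`, the recovered
state `R` is unobservable and the death rate `d₃` unidentifiable: if `(S, I, R, A, Q, J)`
solves the model equations on the open interval `(p, q)` containing `t₀`, then for every
`d₃'` and `c` the function
`R'(t) = e^{−d₃'(t−t₀)} c + ∫_{t₀}^{t} e^{−d₃'(t−s)} (γ₁ I(s) + γ₂ J(s)) ds`
satisfies `Ṙ' = γ₁I + γ₂J − d₃'R'` on `(p, q)`, so `(S, I, R', A, Q, J)` solves the same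
model with `d₃` replaced by `d₃'` and with identical measured outputs `Q` and `J`.
Here `lam` denotes the parameter `λ` of the model. -/
theorem sir26_R_unobservable_d3_unidentifiable
    (b N d₁ d₂ d₃ d₄ d₅ d₆ k₁ k₂ lam γ₁ γ₂ εa εq εj μ₁ μ₂ p q t₀ : ℝ)
    (ht₀ : t₀ ∈ Set.Ioo p q)
    (S I R A Q J : ℝ → ℝ)
    (hS : ∀ t ∈ Set.Ioo p q, HasDerivAt S
      (b * N - S t * (I t * lam + lam * Q t * εa * εq + lam * εa * A t + lam * εj * J t + d₁)) t)
    (hI : ∀ t ∈ Set.Ioo p q, HasDerivAt I (k₁ * A t - (γ₁ + μ₂ + d₂) * I t) t)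
    (hR : ∀ t ∈ Set.Ioo p q, HasDerivAt R (γ₁ * I t + γ₂ * J t - d₃ * R t) t)
    (hA : ∀ t ∈ Set.Ioo p q, HasDerivAt A
      (S t * (I t * lam + lam * Q t * εa * εq + lam * εa * A t + lam * εj * J t)
        - (k₁ + μ₁ + d₄) * A t) t)
    (hQ : ∀ t ∈ Set.Ioo p q, HasDerivAt Q (μ₁ * A t - (k₂ + d₅) * Q t) t)
    (hJ : ∀ t ∈ Set.Ioo p q, HasDerivAt J (k₂ * Q t + μ₂ * I t - (γ₂ + d₆) * J t) t) :
    ∀ d₃' c : ℝ, ∀ t ∈ Set.Ioo p q,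
      HasDerivAt S
        (b * N - S t * (I t * lam + lam * Q t * εa * εq + lam * εa * A t
          + lam * εj * J t + d₁)) t ∧
      HasDerivAt I (k₁ * A t - (γ₁ + μ₂ + d₂) * I t) t ∧
      HasDerivAt
        (fun u => Real.exp (-d₃' * (u - t₀)) * c
          + ∫ s in t₀..u, Real.exp (-d₃' * (u - s)) * (γ₁ * I s + γ₂ * J s))
        (γ₁ * I t + γ₂ * J t
          - d₃' * (Real.exp (-d₃' * (t - t₀)) * c
            + ∫ s in t₀..t, Real.exp (-d₃' * (t - s)) * (γ₁ * I s + γ₂ * J s))) t ∧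
      HasDerivAt A
        (S t * (I t * lam + lam * Q t * εa * εq + lam * εa * A t + lam * εj * J t)
          - (k₁ + μ₁ + d₄) * A t) t ∧
      HasDerivAt Q (μ₁ * A t - (k₂ + d₅) * Q t) t ∧
      HasDerivAt J (k₂ * Q t + μ₂ * I t - (γ₂ + d₆) * J t) t ∧
      Q t = Q t ∧ J t = J t := by
  intro d₃' c t ht
  refine ⟨hS t ht, hI t ht, ?_, hA t ht, hQ t ht, hJ t ht, rfl, rfl⟩
  set f : ℝ → ℝ := fun s => Real.exp (d₃' * s) * (γ₁ * I s + γ₂ * J s) with hfdef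
  have hIc : ContinuousOn I (Set.Ioo p q) :=
    fun x hx => (hI x hx).continuousAt.continuousWithinAt
  have hJc : ContinuousOn J (Set.Ioo p q) :=
    fun x hx => (hJ x hx).continuousAt.continuousWithinAt
  have hfc : ContinuousOn f (Set.Ioo p q) := by
    apply ContinuousOn.mul
    · exact (Real.continuous_exp.comp (continuous_const.mul continuous_id)).continuousOn
    · exact (continuousOn_const.mul hIc).add (continuousOn_const.mul hJc)
  have hord : Set.OrdConnected (Set.Ioo p q) := Set.ordConnected_Ioo
  have hint : IntervalIntegrable f MeasureTheory.volume t₀ t :=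
    (hfc.mono (hord.uIcc_subset ht₀ ht)).intervalIntegrable
  have hg : HasDerivAt (fun u => ∫ s in t₀..u, f s) (f t) t :=
    intervalIntegral.integral_hasDerivAt_right hint
      (hfc.stronglyMeasurableAtFilter isOpen_Ioo t ht)
      (hfc.continuousAt (isOpen_Ioo.mem_nhds ht))
  have hexp : HasDerivAt (fun u => Real.exp (-d₃' * u)) (Real.exp (-d₃' * t) * (-d₃')) t := by
    have h := (Real.hasDerivAt_exp (-d₃' * t)).comp t ((hasDerivAt_id t).const_mul (-d₃'))
    simpa [Function.comp_def] using h
  set K : ℝ := Real.exp (d₃' * t₀) * c with hK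
  have hprod : HasDerivAt (fun u => Real.exp (-d₃' * u) * (K + ∫ s in t₀..u, f s))
      (Real.exp (-d₃' * t) * (-d₃') * (K + ∫ s in t₀..t, f s) + Real.exp (-d₃' * t) * f t) t :=
    hexp.mul (hg.const_add K)
  have hEq : ∀ u : ℝ,
      Real.exp (-d₃' * u) * (K + ∫ s in t₀..u, f s)
        = Real.exp (-d₃' * (u - t₀)) * c
          + ∫ s in t₀..u, Real.exp (-d₃' * (u - s)) * (γ₁ * I s + γ₂ * J s) := by
    intro u
    have h1 : ∀ s : ℝ, Real.exp (-d₃' * (u - s)) * (γ₁ * I s + γ₂ * J s)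
        = Real.exp (-d₃' * u) * f s := by
      intro s
      rw [hfdef]
      simp only [← mul_assoc, ← Real.exp_add]
      ring_nf
    have h2 : (∫ s in t₀..u, Real.exp (-d₃' * (u - s)) * (γ₁ * I s + γ₂ * J s))
        = Real.exp (-d₃' * u) * ∫ s in t₀..u, f s := by
      simp only [h1, intervalIntegral.integral_const_mul]
    rw [h2, hK, mul_add, ← mul_assoc, ← Real.exp_add]
    ring_nf
  have hfun : (fun u => Real.exp (-d₃' * u) * (K + ∫ s in t₀..u, f s))
      = (fun u => Real.exp (-d₃' * (u - t₀)) * c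
          + ∫ s in t₀..u, Real.exp (-d₃' * (u - s)) * (γ₁ * I s + γ₂ * J s)) :=
    funext hEq
  rw [hfun] at hprod
  convert hprod using 1
  rw [← hEq t]
  have h1 : Real.exp (-d₃' * t) * Real.exp (d₃' * t) = 1 := by
    rw [← Real.exp_add]; ring_nf; exact Real.exp_zero
  rw [hfdef]
  simp only []
  linear_combination (-(γ₁ * I t + γ₂ * J t)) * h1
end

section
/- Fix N > 0 and a continuous known input g : J → ℝ on an open interval J. Let (S, A, I, R, D) with parameters (β₀, ζ₀, k, γ, δ) and (S', A', I', R', D') with parameters (β₀', ζ₀', k', γ', δ') be differentiable solutions on J of Ṡ = −β₀gSI/N − ζ₀gSA/N, Ȧ = β₀gSI/N + ζ₀gSA/N − kA, İ = kA − (γ+δ)I, Ṙ = γI, Ḋ = δI. Assume that for all t ∈ J: I(t) = I'(t) > 0, R(t) = R'(t) and D(t) = D'(t). Then γ = γ', δ = δ', and k·A(t) = k'·A'(t) for all t ∈ J. (That is, in the Raimúndez et al. model with outputs I, R, D, the recovery rate γ and the death rate δ are structurally identifiable, and the flux kA from the asymptomatic to the infected compartment is observable.) -/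
/-- In the model 27 (Raimúndez et al.) with known input `g`, known population `N` and
measured outputs `I, R, D`, the rates `γ` and `δ` are structurally identifiable and the
flux `kA` is observable: any two solutions of
`Ṡ = −β₀gSI/N − ζ₀gSA/N`, `Ȧ = β₀gSI/N + ζ₀gSA/N − kA`, `İ = kA − (γ+δ)I`, `Ṙ = γI`,
`Ḋ = δI` on the open interval `(a, b)` with equal positive infected trajectories and equal
`R` and `D` trajectories must share `γ`, `δ`, and the product `k·A`. -/
theorem sir27_gamma_delta_identifiable_kA_observable
    (N a b : ℝ) (hN : 0 < N) (hab : a < b)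
    (g : ℝ → ℝ) (hg : ContinuousOn g (Set.Ioo a b))
    (β₀ ζ₀ k γ δ β₀' ζ₀' k' γ' δ' : ℝ)
    (S A I R D S' A' I' R' D' : ℝ → ℝ)
    (hS : ∀ t ∈ Set.Ioo a b, HasDerivAt S
      (-β₀ * g t * S t * I t / N - ζ₀ * g t * S t * A t / N) t)
    (hA : ∀ t ∈ Set.Ioo a b, HasDerivAt A
      (β₀ * g t * S t * I t / N + ζ₀ * g t * S t * A t / N - k * A t) t)
    (hI : ∀ t ∈ Set.Ioo a b, HasDerivAt I (k * A t - (γ + δ) * I t) t)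
    (hR : ∀ t ∈ Set.Ioo a b, HasDerivAt R (γ * I t) t)
    (hD : ∀ t ∈ Set.Ioo a b, HasDerivAt D (δ * I t) t)
    (hS' : ∀ t ∈ Set.Ioo a b, HasDerivAt S'
      (-β₀' * g t * S' t * I' t / N - ζ₀' * g t * S' t * A' t / N) t)
    (hA' : ∀ t ∈ Set.Ioo a b, HasDerivAt A'
      (β₀' * g t * S' t * I' t / N + ζ₀' * g t * S' t * A' t / N - k' * A' t) t)
    (hI' : ∀ t ∈ Set.Ioo a b, HasDerivAt I' (k' * A' t - (γ' + δ') * I' t) t)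
    (hR' : ∀ t ∈ Set.Ioo a b, HasDerivAt R' (γ' * I' t) t)
    (hD' : ∀ t ∈ Set.Ioo a b, HasDerivAt D' (δ' * I' t) t)
    (houtI : ∀ t ∈ Set.Ioo a b, I t = I' t)
    (hIpos : ∀ t ∈ Set.Ioo a b, 0 < I t)
    (houtR : ∀ t ∈ Set.Ioo a b, R t = R' t)
    (houtD : ∀ t ∈ Set.Ioo a b, D t = D' t) :
    γ = γ' ∧ δ = δ' ∧ ∀ t ∈ Set.Ioo a b, k * A t = k' * A' t := by
  set t₀ : ℝ := (a + b) / 2 with ht₀def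
  have ht₀ : t₀ ∈ Set.Ioo a b := ⟨by simp [ht₀def]; linarith, by simp [ht₀def]; linarith⟩
  have hmem : ∀ t ∈ Set.Ioo a b, Set.Ioo a b ∈ nhds t := fun t ht =>
    isOpen_Ioo.mem_nhds ht
  -- R and R' agree near any point of Ioo
  have hReq : ∀ t ∈ Set.Ioo a b, HasDerivAt R (γ' * I' t) t := by
    intro t ht
    have heq : R =ᶠ[nhds t] R' := Filter.eventuallyEq_of_mem (hmem t ht) houtR
    exact heq.hasDerivAt_iff.mpr (hR' t ht)
  have hDeq : ∀ t ∈ Set.Ioo a b, HasDerivAt D (δ' * I' t) t := by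
    intro t ht
    have heq : D =ᶠ[nhds t] D' := Filter.eventuallyEq_of_mem (hmem t ht) houtD
    exact heq.hasDerivAt_iff.mpr (hD' t ht)
  have hIeq : ∀ t ∈ Set.Ioo a b, HasDerivAt I (k' * A' t - (γ' + δ') * I' t) t := by
    intro t ht
    have heq : I =ᶠ[nhds t] I' := Filter.eventuallyEq_of_mem (hmem t ht) houtI
    exact heq.hasDerivAt_iff.mpr (hI' t ht)
  have hIt := hIpos t₀ ht₀
  have hγ : γ = γ' := by
    have h1 := (hR t₀ ht₀).unique (hReq t₀ ht₀)
    rw [← houtI t₀ ht₀] at h1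
    exact mul_right_cancel₀ (ne_of_gt hIt) h1
  have hδ : δ = δ' := by
    have h1 := (hD t₀ ht₀).unique (hDeq t₀ ht₀)
    rw [← houtI t₀ ht₀] at h1
    exact mul_right_cancel₀ (ne_of_gt hIt) h1
  refine ⟨hγ, hδ, fun t ht => ?_⟩
  have h1 := (hI t ht).unique (hIeq t ht)
  rw [← houtI t ht, hγ, hδ] at h1
  linarith
end
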